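/- The direct product ℤ × ⟨x₁, x₂ | (x₁x₂)² = (x₂x₁)²⟩, where the second factor is the presented group with single relator (x₁x₂)²·((x₂x₁)²)⁻¹, is big, i.e. it contains a subgroup which is free of rank 2. Likewise ℤ² × ⟨x₁, x₂ | (x₁x₂)² = (x₂x₁)² = e⟩ is big. -/

import Mathlib

/-!
Let `τ` swap the two generators `a, b` of the free group `F(a, b)`, acting on it inside
`F(a, b) ⋊ S₂`. Sending `x₁ ↦ a` and `x₂ ↦ a⁻¹τ` kills both relators, because `x₁x₂ ↦ τ` is an
involution and `x₂x₁ ↦ a⁻¹τa` is conjugate to it. Under this map `x₁` and `(x₁x₂)x₁(x₁x₂)` go to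
`a` and `τaτ = b`, so they generate a free subgroup of rank 2 of either presented group, and
hence of its product with any group.
-/

namespace Stmt16

/-- A group `G` is big if it contains a free subgroup of rank 2, i.e. there is an
injective group homomorphism from the free group on two generators into `G`. -/
def Big (G : Type*) [Group G] : Prop :=
  ∃ f : FreeGroup (Fin 2) →* G, Function.Injective f

/-- The single relator `(x₁x₂)²((x₂x₁)²)⁻¹` of `⟨x₁, x₂ | (x₁x₂)² = (x₂x₁)²⟩`. -/
def rels₁ : Set (FreeGroup (Fin 2)) :=
  {(FreeGroup.of 0 * FreeGroup.of 1) ^ 2 * ((FreeGroup.of 1 * FreeGroup.of 0) ^ 2)⁻¹}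

/-- The relators `(x₁x₂)²`, `(x₂x₁)²` of `⟨x₁, x₂ | (x₁x₂)² = (x₂x₁)² = e⟩`. -/
def rels₂ : Set (FreeGroup (Fin 2)) :=
  {(FreeGroup.of 0 * FreeGroup.of 1) ^ 2, (FreeGroup.of 1 * FreeGroup.of 0) ^ 2}

lemma Big.of_injective {G K : Type*} [Group G] [Group K] (h : Big G) {φ : G →* K}
    (hφ : Function.Injective φ) : Big K :=
  let ⟨f, hf⟩ := h
  ⟨φ.comp f, hφ.comp hf⟩

lemma Big.prod_left {G : Type*} [Group G] (A : Type*) [Group A] (h : Big G) : Big (A × G) :=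
  h.of_injective (φ := MonoidHom.inr A G) (Prod.mk_right_injective 1)

open FreeGroup (of lift)
open SemidirectProduct

def permAut (α : Type*) : Equiv.Perm α →* MulAut (FreeGroup α) where
  toFun := FreeGroup.freeGroupCongr
  map_one' := FreeGroup.freeGroupCongr_refl
  map_mul' σ τ := (FreeGroup.freeGroupCongr_trans τ σ).symm

lemma inr_mul_inl_of_mul_inr_inv {α : Type*} (σ : Equiv.Perm α) (a : α) :
    (inr σ * inl (of a) * inr σ⁻¹ : FreeGroup α ⋊[permAut α] Equiv.Perm α) = inl (of (σ a)) := by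
  rw [← inl_aut]
  rfl

abbrev FreeSwapProduct := FreeGroup (Fin 2) ⋊[permAut (Fin 2)] Equiv.Perm (Fin 2)

def swapGens : FreeSwapProduct := inr (Equiv.swap 0 1)

lemma swapGens_mul_self : swapGens * swapGens = 1 := by
  rw [swapGens, ← map_mul, Equiv.swap_mul_self, map_one]

lemma swapGens_mul_inl_of_zero_mul_swapGens : swapGens * inl (of 0) * swapGens = inl (of 1) := by
  unfold swapGens
  simpa using inr_mul_inl_of_mul_inr_inv (Equiv.swap (0 : Fin 2) 1) 0

def genImages : Fin 2 → FreeSwapProduct := ![inl (of 0), (inl (of 0))⁻¹ * swapGens]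

lemma genImages_zero_mul_one : genImages 0 * genImages 1 = swapGens := by
  simp [genImages]

lemma genImages_one_mul_zero :
    genImages 1 * genImages 0 = (inl (of 0))⁻¹ * swapGens * inl (of 0) :=
  rfl

lemma lift_genImages_of_zero_mul_of_one_sq :
    lift genImages ((of 0 * of 1) ^ 2) = 1 := by
  rw [map_pow, map_mul, FreeGroup.lift_apply_of, FreeGroup.lift_apply_of,
    genImages_zero_mul_one, sq, swapGens_mul_self]

lemma lift_genImages_of_one_mul_of_zero_sq :
    lift genImages ((of 1 * of 0) ^ 2) = 1 := by
  rw [map_pow, map_mul, FreeGroup.lift_apply_of, FreeGroup.lift_apply_of,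
    genImages_one_mul_zero, ← MulAut.conj_symm_apply, ← map_pow, sq, swapGens_mul_self,
    map_one]

lemma lift_genImages_rels₁ : ∀ r ∈ rels₁, lift genImages r = 1 := by
  rintro r rfl
  rw [map_mul, map_inv, lift_genImages_of_zero_mul_of_one_sq,
    lift_genImages_of_one_mul_of_zero_sq, inv_one, mul_one]

lemma lift_genImages_rels₂ : ∀ r ∈ rels₂, lift genImages r = 1 := by
  rintro r (rfl | rfl)
  · exact lift_genImages_of_zero_mul_of_one_sq
  · exact lift_genImages_of_one_mul_of_zero_sq

def freeGens (rels : Set (FreeGroup (Fin 2))) : Fin 2 → PresentedGroup rels :=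
  ![PresentedGroup.of 0,
    (PresentedGroup.of 0 * PresentedGroup.of 1) * PresentedGroup.of 0 *
      (PresentedGroup.of 0 * PresentedGroup.of 1)]

lemma toGroup_comp_lift_freeGens {rels : Set (FreeGroup (Fin 2))}
    (hrels : ∀ r ∈ rels, lift genImages r = 1) :
    (PresentedGroup.toGroup hrels).comp (lift (freeGens rels)) = inl := by
  refine FreeGroup.ext_hom _ _ (Fin.forall_fin_two.2 ⟨?_, ?_⟩)
  · simp only [MonoidHom.comp_apply, FreeGroup.lift_apply_of, freeGens, Matrix.cons_val_zero,
      PresentedGroup.toGroup.of]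
    rfl
  · simp only [MonoidHom.comp_apply, FreeGroup.lift_apply_of, freeGens, Matrix.cons_val_one,
      Matrix.cons_val_fin_one, map_mul, PresentedGroup.toGroup.of]
    rw [genImages_zero_mul_one]
    exact swapGens_mul_inl_of_zero_mul_swapGens

lemma big_presentedGroup {rels : Set (FreeGroup (Fin 2))}
    (hrels : ∀ r ∈ rels, lift genImages r = 1) : Big (PresentedGroup rels) :=
  ⟨lift (freeGens rels), Function.Injective.of_comp (f := PresentedGroup.toGroup hrels) <| by
    rw [← MonoidHom.coe_comp, toGroup_comp_lift_freeGens]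
    exact inl_injective⟩

/-- `ℤ × ⟨x₁, x₂ | (x₁x₂)² = (x₂x₁)²⟩` and `ℤ² × ⟨x₁, x₂ | (x₁x₂)² = (x₂x₁)² = e⟩`
are big. -/
theorem products_big :
    Big (Multiplicative ℤ × PresentedGroup rels₁) ∧
      Big (Multiplicative (ℤ × ℤ) × PresentedGroup rels₂) :=
  ⟨(big_presentedGroup lift_genImages_rels₁).prod_left _,
    (big_presentedGroup lift_genImages_rels₂).prod_left _⟩

end Stmt16
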